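/- arXiv:2404.04706 — 3 statements merged into one kernel-verified Lean document; each statement's English description precedes it below -/
import Mathlib

section
/- The Gaussian mechanism is (ε,δ)-differentially private: Let ε ∈ (0,1), δ ∈ (0,1), and let f : ℕ^𝒳 → ℝ^k be a vector of numeric queries with finite ℓ2 global sensitivity Δ₂(f) = sup over neighboring databases x, y of ‖f(x) − f(y)‖₂. Let c > 0 satisfy c² > 2·ln(1.25/δ) and let σ ≥ c · Δ₂(f)/ε. Then the Gaussian mechanism M_G, which on input database x outputs f(x) + (Z₁, …, Z_k) where the Z_j are independent N(0, σ²) Gaussian random variables, is (ε,δ)-differentially private. -/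
open MeasureTheory

/-- The ℓ1 distance `‖x - y‖₁` between databases `x y : 𝒳 →₀ ℕ`. -/
def dbDist {𝒳 : Type*} [DecidableEq 𝒳] (x y : 𝒳 →₀ ℕ) : ℕ :=
  (x.support ∪ y.support).sum fun a => ((x a : ℤ) - (y a : ℤ)).natAbs

/-- Databases `x` and `y` are neighboring if `‖x - y‖₁ ≤ 1`. -/
def Neighboring {𝒳 : Type*} [DecidableEq 𝒳] (x y : 𝒳 →₀ ℕ) : Prop :=
  dbDist x y ≤ 1

/-- A mechanism `M` is `(ε, δ)`-differentially private if for all measurable sets `S` and all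
neighboring databases `x, y`, `M x S ≤ e^ε * M y S + δ`. -/
def IsDP {𝒳 : Type*} [DecidableEq 𝒳] {Ω : Type*} [MeasurableSpace Ω]
    (M : (𝒳 →₀ ℕ) → Measure Ω) (ε δ : ℝ) : Prop :=
  ∀ x y : 𝒳 →₀ ℕ, Neighboring x y → ∀ S : Set Ω, MeasurableSet S →
    M x S ≤ ENNReal.ofReal (Real.exp ε) * M y S + ENNReal.ofReal δ

open ProbabilityTheory

/-- The Gaussian mechanism for a vector-valued query `f : ℕ^𝒳 → ℝ^k` with noise standard
deviation `σ`: on input database `x` it outputs `f x + (Z 1, …, Z k)` where the `Z j` are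
independent `N(0, σ²)` Gaussian random variables. -/
noncomputable def gaussianMechanism {𝒳 : Type*} {k : ℕ} (f : (𝒳 →₀ ℕ) → (Fin k → ℝ))
    (σ : ℝ) : (𝒳 →₀ ℕ) → Measure (Fin k → ℝ) :=
  fun x => (Measure.pi fun _ : Fin k => gaussianReal 0 (σ ^ 2).toNNReal).map
    fun z => f x + z

/-!
The density of `N(f x, σ² I)` with respect to `N(f y, σ² I)` is `exp L` for the privacy loss `L`,
an affine function of the output, so an event splits according to whether `L ≤ ε`:
`M x S ≤ e^ε M y S + P(L > ε)`. Under `N(f x, σ² I)` the privacy loss is `N(η, 2η)` with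
`η = ‖f x - f y‖² / (2σ²) ≤ ε² / (2c²)`. If `η ≤ ε`, comparing the densities of `N(η, 2η)` and
`N(ε, 2η)` gives `P(L > ε) ≤ e^{-(ε - η)² / (4η)} / 2 ≤ e^{(ε - c²)/2} / 2 ≤ δ`. If `η > ε`, then
`2c² < ε`, which forces `δ > 15/16`, and `P(L > ε) ≤ 1/2 + P(ε < L ≤ η)` is bounded through the
maximum of the Gaussian density.
-/

open Set
open scoped ENNReal NNReal

namespace MeasureTheory

section Pi

variable {ι : Type*} [Fintype ι] {α : ι → Type*} [∀ i, MeasurableSpace (α i)]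
  {μ : ∀ i, Measure (α i)} [∀ i, IsProbabilityMeasure (μ i)] {f : ∀ i, α i → ℝ≥0∞}

lemma lintegral_fintype_prod_eq_prod (hf : ∀ i, Measurable (f i)) :
    ∫⁻ x, ∏ i, f i (x i) ∂Measure.pi μ = ∏ i, ∫⁻ y, f i y ∂μ i := by
  rw [lintegral_prod_eq_prod_lintegral_of_indepFun _ _ (iIndepFun_pi fun i => (hf i).aemeasurable)
    fun i => (hf i).comp (measurable_pi_apply i)]
  exact Finset.prod_congr rfl fun i _ => (measurePreserving_eval μ i).lintegral_comp (hf i)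

lemma Measure.pi_withDensity (hf : ∀ i, Measurable (f i))
    [∀ i, SigmaFinite ((μ i).withDensity (f i))] :
    Measure.pi (fun i => (μ i).withDensity (f i))
      = (Measure.pi μ).withDensity fun x => ∏ i, f i (x i) := by
  refine Measure.pi_eq fun s hs => ?_
  have hind : (univ.pi s).indicator (fun x => ∏ i, f i (x i))
      = fun x => ∏ i, (s i).indicator (f i) (x i) := by
    ext x
    by_cases hx : x ∈ univ.pi s
    · simp_all [indicator_of_mem]
    · obtain ⟨i, hi⟩ : ∃ i, x i ∉ s i := by simpa using hx
      rw [indicator_of_notMem hx, eq_comm]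
      exact Finset.prod_eq_zero (Finset.mem_univ i) (indicator_of_notMem hi _)
  rw [withDensity_apply _ (.univ_pi hs), ← lintegral_indicator (.univ_pi hs), hind,
    lintegral_fintype_prod_eq_prod fun i => (hf i).indicator (hs i)]
  simp_rw [lintegral_indicator (hs _), withDensity_apply _ (hs _)]

end Pi

lemma withDensity_exp_apply_le_exp_mul_add {α : Type*} [MeasurableSpace α] {ν : Measure α}
    {L : α → ℝ} (hL : Measurable L) (ε : ℝ) {S : Set α} (hS : MeasurableSet S) :
    ν.withDensity (fun x => ENNReal.ofReal (Real.exp (L x))) S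
      ≤ ENNReal.ofReal (Real.exp ε) * ν S
        + ν.withDensity (fun x => ENNReal.ofReal (Real.exp (L x))) {x | ε < L x} := by
  set μ := ν.withDensity fun x => ENNReal.ofReal (Real.exp (L x))
  have hG : MeasurableSet {x | ε < L x} := measurableSet_lt measurable_const hL
  have hgood : μ (S \ {x | ε < L x}) ≤ ENNReal.ofReal (Real.exp ε) * ν S := by
    calc μ (S \ {x | ε < L x})
        ≤ ∫⁻ _ in S \ {x | ε < L x}, ENNReal.ofReal (Real.exp ε) ∂ν := by
          rw [withDensity_apply _ (hS.diff hG)]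
          refine setLIntegral_mono measurable_const fun x hx => ?_
          exact ENNReal.ofReal_le_ofReal (Real.exp_le_exp.mpr (not_lt.mp hx.2))
      _ ≤ ENNReal.ofReal (Real.exp ε) * ν S := by
          rw [setLIntegral_const]; gcongr; exact sdiff_subset
  calc μ S = μ (S ∩ {x | ε < L x}) + μ (S \ {x | ε < L x}) := (measure_inter_add_sdiff S hG).symm
    _ ≤ μ {x | ε < L x} + ENNReal.ofReal (Real.exp ε) * ν S :=
        add_le_add (measure_mono inter_subset_right) hgood
    _ = _ := add_comm _ _

end MeasureTheory

namespace ProbabilityTheory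

section Real

variable {v : ℝ≥0}

lemma gaussianReal_eq_withDensity_gaussianReal (hv : v ≠ 0) (m₁ m₂ : ℝ) :
    gaussianReal m₁ v = (gaussianReal m₂ v).withDensity
      fun x => ENNReal.ofReal (Real.exp (((x - m₂) ^ 2 - (x - m₁) ^ 2) / (2 * v))) := by
  rw [gaussianReal_of_var_ne_zero _ hv, gaussianReal_of_var_ne_zero _ hv,
    ← withDensity_mul _ (measurable_gaussianPDF _ _) (by fun_prop)]
  congr 1
  funext x
  rw [Pi.mul_apply, gaussianPDF, gaussianPDF, ← ENNReal.ofReal_mul (gaussianPDFReal_nonneg _ _ _),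
    gaussianPDFReal, gaussianPDFReal, mul_assoc _ (Real.exp _), ← Real.exp_add]
  congr 3
  ring

lemma gaussianReal_Ioi_self_le (μ : ℝ) : gaussianReal μ v (Ioi μ) ≤ 2⁻¹ := by
  have hreflect : (gaussianReal μ v).map (2 * μ - ·) = gaussianReal μ v := by
    rw [gaussianReal_map_const_sub]; ring_nf
  have hsymm : gaussianReal μ v (Iio μ) = gaussianReal μ v (Ioi μ) := by
    conv_rhs => rw [← hreflect]
    rw [Measure.map_apply (by fun_prop) measurableSet_Ioi]
    congr 1
    ext x
    simp only [mem_Iio, mem_preimage, mem_Ioi]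
    constructor <;> intro h <;> linarith
  have h2 : gaussianReal μ v (Ioi μ) + gaussianReal μ v (Ioi μ) ≤ 1 := by
    nth_rewrite 1 [← hsymm]
    rw [← measure_union Iio_disjoint_Ioi_same measurableSet_Ioi]
    exact prob_le_one
  by_contra! hlt
  exact (ENNReal.inv_two_add_inv_two ▸ ENNReal.add_lt_add hlt hlt).not_ge h2

lemma gaussianReal_Ioc_le (hv : v ≠ 0) (μ a b : ℝ) :
    gaussianReal μ v (Ioc a b) ≤ ENNReal.ofReal ((b - a) / √(2 * Real.pi * v)) := by
  have hpdf : ∀ x, gaussianPDF μ v x ≤ ENNReal.ofReal (√(2 * Real.pi * v))⁻¹ := fun x =>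
    ENNReal.ofReal_le_ofReal <| mul_le_of_le_one_right (by positivity)
      (Real.exp_le_one_iff.mpr (div_nonpos_of_nonpos_of_nonneg (by nlinarith) (by positivity)))
  calc gaussianReal μ v (Ioc a b) = ∫⁻ x in Ioc a b, gaussianPDF μ v x := gaussianReal_apply _ hv _
    _ ≤ ∫⁻ _ in Ioc a b, ENNReal.ofReal (√(2 * Real.pi * v))⁻¹ := lintegral_mono hpdf
    _ = _ := by
      rw [setLIntegral_const, Real.volume_Ioc, ← ENNReal.ofReal_mul (by positivity), div_eq_inv_mul]

lemma gaussianReal_Ioi_le (hv : v ≠ 0) {μ a : ℝ} (h : μ ≤ a) :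
    gaussianReal μ v (Ioi a) ≤ ENNReal.ofReal (Real.exp (-(a - μ) ^ 2 / (2 * v))) * 2⁻¹ := by
  rw [gaussianReal_eq_withDensity_gaussianReal hv μ a, withDensity_apply _ measurableSet_Ioi]
  calc _ ≤ ∫⁻ _ in Ioi a, ENNReal.ofReal (Real.exp (-(a - μ) ^ 2 / (2 * v))) ∂gaussianReal a v := by
        refine setLIntegral_mono (by fun_prop) fun x (hx : a < x) => ?_
        gcongr
        nlinarith
    _ ≤ _ := by
      rw [setLIntegral_const]
      gcongr
      exact gaussianReal_Ioi_self_le a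

lemma gaussianReal_Ioi_le_of_le {ε δ c η : ℝ} (hε1 : ε < 1)
    (hδc : 1.25 < δ * Real.exp (c ^ 2 / 2)) (hη : 0 < η) (hηε : η ≤ ε)
    (hcη : 2 * c ^ 2 * η ≤ ε ^ 2) (hv : (v : ℝ) = 2 * η) :
    gaussianReal η v (Ioi ε) ≤ ENNReal.ofReal δ := by
  have hv0 : v ≠ 0 := by rw [← NNReal.coe_ne_zero, hv]; positivity
  refine (gaussianReal_Ioi_le hv0 hηε).trans ?_
  rw [← ENNReal.ofReal_ofNat 2, ← ENNReal.ofReal_inv_of_pos two_pos,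
    ← ENNReal.ofReal_mul (Real.exp_pos _).le]
  refine ENNReal.ofReal_le_ofReal ?_
  have hexp : Real.exp (-(ε - η) ^ 2 / (2 * v)) ≤ Real.exp (ε / 2) / Real.exp (c ^ 2 / 2) := by
    rw [← Real.exp_sub, Real.exp_le_exp, hv, div_le_iff₀ (by positivity)]
    nlinarith
  have hε2 : Real.exp (ε / 2) ≤ 2 := by
    refine (Real.exp_bound_div_one_sub_of_interval (by linarith) (by linarith)).trans ?_
    rw [div_le_iff₀ (by linarith)]
    linarith
  have : Real.exp (ε / 2) / Real.exp (c ^ 2 / 2) ≤ 2 * δ := by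
    rw [div_le_iff₀ (Real.exp_pos _)]
    nlinarith [Real.exp_pos (c ^ 2 / 2)]
  nlinarith

lemma gaussianReal_Ioi_le_of_lt {ε δ c η : ℝ} (hε0 : 0 < ε) (hε1 : ε < 1) (hδ1 : δ < 1)
    (hδc : 1.25 < δ * Real.exp (c ^ 2 / 2)) (hεη : ε < η)
    (hcη : 2 * c ^ 2 * η ≤ ε ^ 2) (hv : (v : ℝ) = 2 * η) :
    gaussianReal η v (Ioi ε) ≤ ENNReal.ofReal δ := by
  have hv0 : v ≠ 0 := by rw [← NNReal.coe_ne_zero, hv]; linarith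
  have hcε : 2 * c ^ 2 < ε := by nlinarith
  have hexp :=
    Real.exp_bound_div_one_sub_of_interval (x := c ^ 2 / 2) (by positivity) (by nlinarith)
  have hδc' : 1.25 * (1 - c ^ 2 / 2) < δ := by
    rw [le_div_iff₀ (by nlinarith)] at hexp
    nlinarith [Real.exp_pos (c ^ 2 / 2)]
  have hη : η < 5 / 4 := by nlinarith
  have hIoc : (η - ε) / √(2 * Real.pi * v) ≤ 7 / 16 := by
    have hsq : (η - ε) ^ 2 ≤ (7 / 16 * √(2 * Real.pi * v)) ^ 2 := by
      rw [mul_pow, Real.sq_sqrt (by positivity), hv]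
      nlinarith [Real.pi_gt_three]
    rw [div_le_iff₀ (by positivity)]
    exact (pow_le_pow_iff_left₀ (by linarith) (by positivity) two_ne_zero).mp hsq
  calc gaussianReal η v (Ioi ε) ≤ gaussianReal η v (Ioc ε η) + gaussianReal η v (Ioi η) := by
        rw [← Ioc_union_Ioi_eq_Ioi hεη.le]
        exact measure_union_le _ _
    _ ≤ ENNReal.ofReal (7 / 16) + ENNReal.ofReal (1 / 2) := by
        gcongr
        · exact (gaussianReal_Ioc_le hv0 η ε η).trans (ENNReal.ofReal_le_ofReal hIoc)
        · simpa using gaussianReal_Ioi_self_le η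
    _ ≤ ENNReal.ofReal δ := by
        rw [← ENNReal.ofReal_add (by norm_num) (by norm_num)]
        exact ENNReal.ofReal_le_ofReal (by nlinarith)

/-- `N(η, 2η)` is the law of the privacy loss, see `map_gaussianPrivacyLoss`. -/
lemma gaussianReal_Ioi_le_of_two_mul_log_lt {ε δ c η : ℝ} (hε0 : 0 < ε) (hε1 : ε < 1)
    (hδ0 : 0 < δ) (hδ1 : δ < 1) (hc2 : 2 * Real.log (1.25 / δ) < c ^ 2) (hη : 0 ≤ η)
    (hcη : 2 * c ^ 2 * η ≤ ε ^ 2) (hv : (v : ℝ) = 2 * η) :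
    gaussianReal η v (Ioi ε) ≤ ENNReal.ofReal δ := by
  have hδc : 1.25 < δ * Real.exp (c ^ 2 / 2) := by
    rw [← div_lt_iff₀' hδ0, ← Real.log_lt_iff_lt_exp (by positivity)]
    linarith
  rcases hη.eq_or_lt with rfl | hη
  · rw [mul_zero, NNReal.coe_eq_zero] at hv
    rw [hv, gaussianReal_zero_var, Measure.dirac_apply' _ measurableSet_Ioi,
      indicator_of_notMem (notMem_Ioi.mpr hε0.le)]
    exact zero_le
  rcases le_or_gt η ε with hηε | hεη
  · exact gaussianReal_Ioi_le_of_le hε1 hδc hη hηε hcη hv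
  · exact gaussianReal_Ioi_le_of_lt hε0 hε1 hδ1 hδc hεη hcη hv

end Real

section Pi

variable {ι : Type*} [Fintype ι]

lemma map_pi_gaussianReal_sum_mul (m : ι → ℝ) (v : ι → ℝ≥0) (w : ι → ℝ) :
    (Measure.pi fun i => gaussianReal (m i) (v i)).map (fun x => ∑ i, w i * x i)
      = gaussianReal (∑ i, w i * m i) (∑ i, .mk (w i ^ 2) (sq_nonneg _) * v i) := by
  have hmeas : Measurable fun x : ι → ℝ => ∑ i, w i * x i := by fun_prop
  refine Measure.ext_of_charFun (funext fun t => ?_)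
  rw [charFun_apply_real, integral_map hmeas.aemeasurable (by fun_prop), charFun_gaussianReal]
  have h : ∀ x : ι → ℝ, Complex.exp (t * ↑(∑ i, w i * x i) * Complex.I)
      = ∏ i, Complex.exp (↑(t * w i) * x i * Complex.I) := by
    intro x
    rw [← Complex.exp_sum]
    push_cast
    rw [Finset.mul_sum, Finset.sum_mul]
    congr 1; refine Finset.sum_congr rfl fun i _ => by ring
  simp_rw [h]
  rw [integral_fintype_prod_eq_prod
    (f := fun i (x : ℝ) => Complex.exp (↑(t * w i) * x * Complex.I))]
  simp_rw [← charFun_apply_real, charFun_gaussianReal, ← Complex.exp_sum]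
  congr 1
  push_cast
  rw [Finset.mul_sum, Finset.sum_mul, Finset.sum_mul, Finset.sum_div, ← Finset.sum_sub_distrib]
  refine Finset.sum_congr rfl fun i _ => by ring

/-- The log-likelihood ratio of `N(m₁, v I)` against `N(m₂, v I)`. -/
noncomputable def gaussianPrivacyLoss (m₁ m₂ : ι → ℝ) (v : ℝ≥0) (x : ι → ℝ) : ℝ :=
  ∑ i, ((x i - m₂ i) ^ 2 - (x i - m₁ i) ^ 2) / (2 * v)

lemma measurable_gaussianPrivacyLoss (m₁ m₂ : ι → ℝ) (v : ℝ≥0) :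
    Measurable (gaussianPrivacyLoss m₁ m₂ v) := by
  unfold gaussianPrivacyLoss; fun_prop

lemma pi_gaussianReal_eq_withDensity {v : ℝ≥0} (hv : v ≠ 0) (m₁ m₂ : ι → ℝ) :
    Measure.pi (fun i => gaussianReal (m₁ i) v)
      = (Measure.pi fun i => gaussianReal (m₂ i) v).withDensity
          fun x => ENNReal.ofReal (Real.exp (gaussianPrivacyLoss m₁ m₂ v x)) := by
  have hdens := fun i => gaussianReal_eq_withDensity_gaussianReal hv (m₁ i) (m₂ i)
  have : ∀ i, SigmaFinite ((gaussianReal (m₂ i) v).withDensity fun x =>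
      ENNReal.ofReal (Real.exp (((x - m₂ i) ^ 2 - (x - m₁ i) ^ 2) / (2 * v)))) := fun i => by
    rw [← hdens]; infer_instance
  simp_rw [hdens]
  rw [Measure.pi_withDensity fun i => by fun_prop]
  congr 1
  funext x
  rw [← ENNReal.ofReal_prod_of_nonneg fun i _ => (Real.exp_pos _).le, ← Real.exp_sum]
  rfl

lemma map_gaussianPrivacyLoss {v : ℝ≥0} (hv : v ≠ 0) (m₁ m₂ : ι → ℝ) :
    (Measure.pi fun i => gaussianReal (m₁ i) v).map (gaussianPrivacyLoss m₁ m₂ v)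
      = gaussianReal ((∑ i, (m₁ i - m₂ i) ^ 2) / (2 * v))
          ((∑ i, (m₁ i - m₂ i) ^ 2) / v).toNNReal := by
  set w : ι → ℝ := fun i => (m₁ i - m₂ i) / v
  set b : ℝ := ∑ i, (m₂ i ^ 2 - m₁ i ^ 2) / (2 * v)
  have hv' : (v : ℝ) ≠ 0 := by exact_mod_cast hv
  have haffine : gaussianPrivacyLoss m₁ m₂ v = (· + b) ∘ fun x => ∑ i, w i * x i := by
    funext x
    simp only [gaussianPrivacyLoss, Function.comp, b, w, ← Finset.sum_add_distrib]
    refine Finset.sum_congr rfl fun i _ => ?_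
    field_simp
    ring
  rw [haffine, ← Measure.map_map (by fun_prop) (by fun_prop), map_pi_gaussianReal_sum_mul,
    gaussianReal_map_add_const]
  congr 1
  · simp only [b, w, ← Finset.sum_add_distrib, Finset.sum_div]
    refine Finset.sum_congr rfl fun i _ => ?_
    field_simp
    ring
  · ext
    rw [Real.coe_toNNReal _ (by positivity), NNReal.coe_sum, Finset.sum_div]
    refine Finset.sum_congr rfl fun i _ => ?_
    simp only [w, NNReal.coe_mul, NNReal.coe_mk]
    field_simp

end Pi

end ProbabilityTheory

lemma gaussianMechanism_apply {𝒳 : Type*} {k : ℕ} (f : (𝒳 →₀ ℕ) → (Fin k → ℝ)) (σ : ℝ)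
    (x : 𝒳 →₀ ℕ) :
    gaussianMechanism f σ x = Measure.pi fun j => gaussianReal (f x j) (σ ^ 2).toNNReal := by
  have hmap := Measure.pi_map_pi (μ := fun _ : Fin k => gaussianReal 0 (σ ^ 2).toNNReal)
    (f := fun j => (f x j + ·)) fun j => by fun_prop
  simp_rw [gaussianReal_map_const_add, zero_add] at hmap
  exact hmap

/-- **The Gaussian mechanism is `(ε, δ)`-differentially private.** Let `ε, δ ∈ (0,1)` and
let `f : ℕ^𝒳 → ℝ^k` have ℓ2 global sensitivity (over neighboring databases) at most
`Δ > 0`. Let `c > 0` satisfy `c² > 2 ln(1.25/δ)` and let `σ ≥ c Δ / ε`. Then the Gaussian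
mechanism with standard deviation `σ` is `(ε, δ)`-differentially private. -/
theorem gaussianMechanism_isDP {𝒳 : Type*} [DecidableEq 𝒳] {k : ℕ}
    (f : (𝒳 →₀ ℕ) → (Fin k → ℝ)) (ε δ Δ c σ : ℝ)
    (hε0 : 0 < ε) (hε1 : ε < 1) (hδ0 : 0 < δ) (hδ1 : δ < 1) (hΔ : 0 < Δ)
    (hsens : ∀ x y : 𝒳 →₀ ℕ, Neighboring x y →
      Real.sqrt (∑ j, (f x j - f y j) ^ 2) ≤ Δ)
    (hc : 0 < c) (hc2 : 2 * Real.log (1.25 / δ) < c ^ 2)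
    (hσ : c * Δ / ε ≤ σ) :
    IsDP (gaussianMechanism f σ) ε δ := by
  intro x y hxy S hS
  set v := (σ ^ 2).toNNReal
  set D := ∑ j, (f x j - f y j) ^ 2
  have hσ0 : 0 < σ := (by positivity : 0 < c * Δ / ε).trans_le hσ
  have hv' : (v : ℝ) = σ ^ 2 := Real.coe_toNNReal _ (by positivity)
  have hv : v ≠ 0 := by rw [← NNReal.coe_ne_zero, hv']; positivity
  have hD : c ^ 2 * D ≤ ε ^ 2 * σ ^ 2 := by
    have hcD : c * √D ≤ ε * σ := by
      calc c * √D ≤ c * Δ := by gcongr; exact hsens x y hxy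
        _ ≤ ε * σ := by rw [div_le_iff₀ hε0] at hσ; linarith
    have hsq := pow_le_pow_left₀ (by positivity) hcD 2
    rwa [mul_pow, mul_pow, Real.sq_sqrt (by positivity)] at hsq
  rw [gaussianMechanism_apply, gaussianMechanism_apply,
    pi_gaussianReal_eq_withDensity hv (f x) (f y)]
  refine (withDensity_exp_apply_le_exp_mul_add (measurable_gaussianPrivacyLoss _ _ _) ε hS).trans
    (add_le_add le_rfl ?_)
  rw [← pi_gaussianReal_eq_withDensity hv, ← preimage_ofPred_eq, Ioi_def,
    ← Measure.map_apply (measurable_gaussianPrivacyLoss _ _ _) measurableSet_Ioi,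
    map_gaussianPrivacyLoss hv]
  refine gaussianReal_Ioi_le_of_two_mul_log_lt hε0 hε1 hδ0 hδ1 hc2 (by positivity) ?_ ?_
  · rw [hv', mul_div_assoc', div_le_iff₀ (by positivity)]
    nlinarith
  · rw [Real.coe_toNNReal _ (by positivity)]
    field_simp
end

section
/- Privacy amplification via subsampling: Let γ ∈ (0,1], and let M be an (ε,δ)-differentially private mechanism on databases (with respect to add/remove-one neighboring, i.e., ‖x − y‖₁ ≤ 1). Let M' be the mechanism that on input database x first forms a random sub-database by independently retaining each record of x with probability γ and then applies M to the resulting sub-database. Then M' is (ε', γδ)-differentially private, where ε' = ln(1 + γ·(e^ε − 1)); in particular ε' ≤ γ·(e^ε − 1). -/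
open MeasureTheory

/-- Subsampled mechanism: on input database `x`, first form a random sub-database by
independently retaining each record of `x` with probability `γ` (so the retained count of
each record value `a` is binomial `Bin(x a, γ)`), then apply `M` to the sub-database. -/
noncomputable def subsampledMechanism {𝒳 : Type*} [DecidableEq 𝒳] {Ω : Type*}
    [MeasurableSpace Ω] (M : (𝒳 →₀ ℕ) → Measure Ω) (γ : ℝ) :
    (𝒳 →₀ ℕ) → Measure Ω :=
  fun x => ∑ z ∈ Finset.Iic x,
    (ENNReal.ofReal (∏ a ∈ x.support,
      (Nat.choose (x a) (z a) : ℝ) * γ ^ (z a) * (1 - γ) ^ (x a - z a))) • M z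

/-!
Let `x = y + {a}`. Pascal's rule `C(n+1, k+1) = C(n, k+1) + C(n, k)` says that the subsample of
`x` is the subsample of `y` with the extra copy of `a` dropped (probability `1 - γ`) or kept
(probability `γ`). So `P[M(sub x) ∈ S] = (1 - γ) B + γ A`, where `B = P[M(sub y) ∈ S]` and
`A = P[M(sub y + {a}) ∈ S]`. As `sub y` and `sub y + {a}` are neighbours, privacy of `M` gives
`A ≤ e^ε B + δ` and `B ≤ e^ε A + δ`, from which both directions of the amplified bound follow by
elementary algebra; finally `log (1 + t) ≤ t`.
-/

open Finset

noncomputable def binomWeight (γ : ℝ) (n k : ℕ) : ℝ :=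
  n.choose k * γ ^ k * (1 - γ) ^ (n - k)

section Binomial

variable {γ : ℝ}

lemma binomWeight_nonneg (hγ0 : 0 ≤ γ) (hγ1 : γ ≤ 1) (n k : ℕ) : 0 ≤ binomWeight γ n k := by
  have : 0 ≤ 1 - γ := by linarith
  unfold binomWeight
  positivity

lemma binomWeight_of_lt {n k : ℕ} (h : n < k) : binomWeight γ n k = 0 := by
  simp [binomWeight, Nat.choose_eq_zero_of_lt h]

lemma binomWeight_succ_zero (n : ℕ) : binomWeight γ (n + 1) 0 = (1 - γ) * binomWeight γ n 0 := by
  simp [binomWeight, pow_succ, mul_comm]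

lemma binomWeight_succ_succ (n k : ℕ) :
    binomWeight γ (n + 1) (k + 1) = (1 - γ) * binomWeight γ n (k + 1) + γ * binomWeight γ n k := by
  simp only [binomWeight, Nat.choose_succ_succ', Nat.cast_add, Nat.add_sub_add_right]
  rcases lt_or_ge k n with hk | hk
  · rw [show n - k = n - (k + 1) + 1 by omega]
    ring
  · rw [Nat.choose_eq_zero_of_lt (by omega : n < k + 1)]
    ring

lemma sum_binomWeight (n : ℕ) : ∑ k ∈ range (n + 1), binomWeight γ n k = 1 := by
  have h := add_pow γ (1 - γ) n
  rw [add_sub_cancel, one_pow] at h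
  rw [h]
  exact sum_congr rfl fun k _ => by simp only [binomWeight]; ring

lemma sum_binomWeight_succ_mul (n : ℕ) (g : ℕ → ℝ) :
    ∑ k ∈ range (n + 2), binomWeight γ (n + 1) k * g k
      = (1 - γ) * ∑ k ∈ range (n + 1), binomWeight γ n k * g k
        + γ * ∑ k ∈ range (n + 1), binomWeight γ n k * g (k + 1) := by
  have hshift : ∑ k ∈ range (n + 1), binomWeight γ n k * g k
      = ∑ k ∈ range (n + 1), binomWeight γ n (k + 1) * g (k + 1) + binomWeight γ n 0 * g 0 := by
    rw [← sum_range_succ' (fun k => binomWeight γ n k * g k), sum_range_succ _ (n + 1),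
      binomWeight_of_lt n.lt_succ_self, zero_mul, add_zero]
  rw [sum_range_succ', hshift]
  simp only [binomWeight_succ_succ, binomWeight_succ_zero, add_mul, sum_add_distrib, mul_assoc,
    ← mul_sum]
  ring

end Binomial

noncomputable def subsampleWeight {𝒳 : Type*} (γ : ℝ) (x z : 𝒳 →₀ ℕ) : ℝ :=
  ∏ a ∈ x.support, binomWeight γ (x a) (z a)

noncomputable def subsampleMean {𝒳 : Type*} [DecidableEq 𝒳] (γ : ℝ) (x : 𝒳 →₀ ℕ)
    (f : (𝒳 →₀ ℕ) → ℝ) : ℝ :=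
  ∑ z ∈ Iic x, subsampleWeight γ x z * f z

section Subsample

variable {𝒳 : Type*} {γ : ℝ}

lemma subsampleWeight_nonneg (hγ0 : 0 ≤ γ) (hγ1 : γ ≤ 1) (x z : 𝒳 →₀ ℕ) :
    0 ≤ subsampleWeight γ x z :=
  prod_nonneg fun _ _ => binomWeight_nonneg hγ0 hγ1 _ _

lemma subsampleWeight_eq_prod_of_subset {s : Finset 𝒳} {x z : 𝒳 →₀ ℕ} (hs : x.support ⊆ s)
    (hz : z ≤ x) : subsampleWeight γ x z = ∏ a ∈ s, binomWeight γ (x a) (z a) := by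
  refine prod_subset hs fun a _ ha => ?_
  have hxa : x a = 0 := Finsupp.notMem_support_iff.mp ha
  have hza : z a = 0 := by simpa [hxa] using hz a
  simp [binomWeight, hxa, hza]

lemma subsampleWeight_add_single [DecidableEq 𝒳] {y w : 𝒳 →₀ ℕ} {a : 𝒳} (ha : a ∉ y.support)
    (hw : w ≤ y) {n k : ℕ} (hk : k ≤ n) :
    subsampleWeight γ (y + Finsupp.single a n) (w + Finsupp.single a k)
      = binomWeight γ n k * subsampleWeight γ y w := by
  have hya : y a = 0 := Finsupp.notMem_support_iff.mp ha
  have hwa : w a = 0 := by simpa [hya] using hw a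
  have hle : w + Finsupp.single a k ≤ y + Finsupp.single a n :=
    add_le_add hw (Finsupp.single_le_single.mpr hk)
  have hsupp : (y + Finsupp.single a n).support ⊆ insert a y.support := fun b hb => by
    rcases eq_or_ne b a with rfl | hb'
    · exact mem_insert_self _ _
    · simp_all [Finsupp.single_eq_of_ne' hb'.symm]
  rw [subsampleWeight_eq_prod_of_subset hsupp hle, prod_insert ha,
    subsampleWeight_eq_prod_of_subset subset_rfl hw]
  congr 1
  · simp [hya, hwa]
  · refine prod_congr rfl fun b hb => ?_
    have hb' : a ≠ b := fun h => ha (h ▸ hb)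
    simp [Finsupp.single_eq_of_ne' hb']

end Subsample

section Mean

variable {𝒳 : Type*} [DecidableEq 𝒳] {γ : ℝ}

lemma Iic_add_single {y : 𝒳 →₀ ℕ} {a : 𝒳} (ha : a ∉ y.support) (n : ℕ) :
    Iic (y + Finsupp.single a n)
      = (range (n + 1) ×ˢ Iic y).image fun p => p.2 + Finsupp.single a p.1 := by
  have hya : y a = 0 := Finsupp.notMem_support_iff.mp ha
  ext z
  simp only [mem_Iic, mem_image, mem_product, mem_range, Prod.exists]
  constructor
  · intro hz
    refine ⟨z a, z.erase a, ⟨?_, fun b => ?_⟩, Finsupp.erase_add_single a z⟩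
    · simpa [hya, Nat.lt_succ_iff] using hz a
    · rcases eq_or_ne b a with rfl | hb
      · simp
      · simpa [Finsupp.erase_ne hb, Finsupp.single_eq_of_ne' hb.symm] using hz b
  · rintro ⟨k, w, ⟨hk, hw⟩, rfl⟩
    exact add_le_add hw (Finsupp.single_le_single.mpr (Nat.lt_succ_iff.mp hk))

lemma subsampleMean_add_single {y : 𝒳 →₀ ℕ} {a : 𝒳} (ha : a ∉ y.support) (n : ℕ)
    (f : (𝒳 →₀ ℕ) → ℝ) :
    subsampleMean γ (y + Finsupp.single a n) f
      = ∑ k ∈ range (n + 1),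
          binomWeight γ n k * subsampleMean γ y fun w => f (w + Finsupp.single a k) := by
  have hya : y a = 0 := Finsupp.notMem_support_iff.mp ha
  have hinj : Set.InjOn (fun p : ℕ × (𝒳 →₀ ℕ) => p.2 + Finsupp.single a p.1)
      ↑(range (n + 1) ×ˢ Iic y) := by
    rintro ⟨k, w⟩ hp ⟨k', w'⟩ hp' h
    simp only [coe_product, coe_range, coe_Iic, Set.mem_prod, Set.mem_Iio, Set.mem_Iic] at hp hp'
    have hwa : w a = 0 := by simpa [hya] using hp.2 a
    have hwa' : w' a = 0 := by simpa [hya] using hp'.2 a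
    have hk : k = k' := by simpa [hwa, hwa'] using DFunLike.congr_fun h a
    subst hk
    exact Prod.ext rfl (add_right_cancel h)
  rw [subsampleMean, Iic_add_single ha, sum_image hinj, sum_product]
  refine sum_congr rfl fun k hk => ?_
  rw [subsampleMean, mul_sum]
  refine sum_congr rfl fun w hw => ?_
  rw [subsampleWeight_add_single ha (mem_Iic.mp hw) (Nat.lt_succ_iff.mp (mem_range.mp hk)),
    mul_assoc]

lemma subsampleMean_const (x : 𝒳 →₀ ℕ) (c : ℝ) : subsampleMean γ x (fun _ => c) = c := by
  induction x using Finsupp.induction₂ with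
  | zero =>
    have h : Iic (0 : 𝒳 →₀ ℕ) = {0} := Iic_bot
    simp [subsampleMean, subsampleWeight, h]
  | add_single a n y ha _ ih =>
    simp only [subsampleMean_add_single ha, ih, ← sum_mul, sum_binomWeight, one_mul]

lemma subsampleMean_add_single_one (y : 𝒳 →₀ ℕ) (a : 𝒳) (f : (𝒳 →₀ ℕ) → ℝ) :
    subsampleMean γ (y + Finsupp.single a 1) f
      = (1 - γ) * subsampleMean γ y f
        + γ * subsampleMean γ y fun w => f (w + Finsupp.single a 1) := by
  obtain ⟨y, m, ha, rfl⟩ : ∃ y' m, a ∉ y'.support ∧ y = y' + Finsupp.single a m :=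
    ⟨y.erase a, y a, by simp, (Finsupp.erase_add_single a y).symm⟩
  rw [add_assoc, ← Finsupp.single_add, subsampleMean_add_single ha, subsampleMean_add_single ha,
    subsampleMean_add_single ha, sum_binomWeight_succ_mul]
  simp only [add_assoc, ← Finsupp.single_add]

variable (hγ0 : 0 ≤ γ) (hγ1 : γ ≤ 1)
include hγ0 hγ1

lemma subsampleMean_nonneg {x : 𝒳 →₀ ℕ} {f : (𝒳 →₀ ℕ) → ℝ} (hf : ∀ z, 0 ≤ f z) :
    0 ≤ subsampleMean γ x f :=
  sum_nonneg fun z _ => mul_nonneg (subsampleWeight_nonneg hγ0 hγ1 x z) (hf z)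

lemma subsampleMean_le_mul_add {x : 𝒳 →₀ ℕ} {f g : (𝒳 →₀ ℕ) → ℝ} {u δ : ℝ}
    (hfg : ∀ z, f z ≤ u * g z + δ) :
    subsampleMean γ x f ≤ u * subsampleMean γ x g + δ :=
  calc subsampleMean γ x f ≤ subsampleMean γ x fun z => u * g z + δ :=
        sum_le_sum fun z _ => mul_le_mul_of_nonneg_left (hfg z) (subsampleWeight_nonneg hγ0 hγ1 x z)
    _ = u * subsampleMean γ x g + subsampleMean γ x fun _ => δ := by
        simp only [subsampleMean, mul_add, sum_add_distrib, mul_sum, mul_left_comm]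
    _ = u * subsampleMean γ x g + δ := by rw [subsampleMean_const]

end Mean

section Neighboring

variable {𝒳 : Type*} [DecidableEq 𝒳]

lemma dbDist_eq_sum_of_subset {x y : 𝒳 →₀ ℕ} {s : Finset 𝒳} (hx : x.support ⊆ s)
    (hy : y.support ⊆ s) : dbDist x y = ∑ a ∈ s, ((x a : ℤ) - (y a : ℤ)).natAbs := by
  refine sum_subset (union_subset hx hy) fun a _ ha => ?_
  simp only [mem_union, Finsupp.mem_support_iff, not_or, not_not] at ha
  simp [ha.1, ha.2]

lemma dbDist_comm (x y : 𝒳 →₀ ℕ) : dbDist x y = dbDist y x := by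
  simp only [dbDist, union_comm x.support]
  exact sum_congr rfl fun a _ => by omega

lemma Neighboring.symm {x y : 𝒳 →₀ ℕ} (h : Neighboring x y) : Neighboring y x := by
  rwa [Neighboring, dbDist_comm]

lemma sum_natAbs_sub_le_dbDist (x y : 𝒳 →₀ ℕ) (t : Finset 𝒳) :
    ∑ a ∈ t, ((x a : ℤ) - (y a : ℤ)).natAbs ≤ dbDist x y := by
  rw [dbDist_eq_sum_of_subset (s := x.support ∪ y.support ∪ t) (subset_union_left.trans
    subset_union_left) (subset_union_right.trans subset_union_left)]
  exact sum_le_sum_of_subset subset_union_right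

lemma neighboring_add_single_self (x : 𝒳 →₀ ℕ) (a : 𝒳) :
    Neighboring (x + Finsupp.single a 1) x := by
  have ha : a ∈ (x + Finsupp.single a 1).support := by simp
  rw [Neighboring, dbDist_eq_sum_of_subset subset_union_left subset_union_right,
    sum_eq_single_of_mem a (mem_union_left _ ha)]
  · simp
  · intro b _ hb
    simp [Finsupp.single_eq_of_ne' hb.symm]

lemma Neighboring.eq_or_eq_add_single {x y : 𝒳 →₀ ℕ} (h : Neighboring x y) :
    x = y ∨ (∃ a, x = y + Finsupp.single a 1) ∨ ∃ a, y = x + Finsupp.single a 1 := by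
  by_cases hxy : x = y
  · exact Or.inl hxy
  obtain ⟨a, ha⟩ := DFunLike.ne_iff.mp hxy
  have hdist (t : Finset 𝒳) := (sum_natAbs_sub_le_dbDist x y t).trans h
  have hrest : ∀ b ≠ a, x b = y b := fun b hb => by
    have := hdist {b, a}
    rw [sum_pair hb] at this
    omega
  have hxa := hdist {a}
  rw [sum_singleton] at hxa
  have hext : ∀ u v : 𝒳 →₀ ℕ, u a = v a + 1 → (∀ b ≠ a, u b = v b) →
      u = v + Finsupp.single a 1 := fun u v hua huv => Finsupp.ext fun b => by
    rcases eq_or_ne b a with rfl | hb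
    · simp [hua]
    · simp [huv b hb, Finsupp.single_eq_of_ne' hb.symm]
  rcases (by omega : x a = y a + 1 ∨ y a = x a + 1) with hup | hdown
  · exact Or.inr (Or.inl ⟨a, hext x y hup hrest⟩)
  · exact Or.inr (Or.inr ⟨a, hext y x hdown fun b hb => (hrest b hb).symm⟩)

end Neighboring

lemma le_amplified_of_le_mul_add {u γ δ A B : ℝ} (hu : 1 ≤ u) (hγ0 : 0 ≤ γ) (hγ1 : γ ≤ 1)
    (hδ : 0 ≤ δ) (hB : 0 ≤ B) (hBA : B ≤ u * A + δ) :
    B ≤ (1 + γ * (u - 1)) * ((1 - γ) * B + γ * A) + γ * δ := by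
  have hγu : 0 ≤ γ * (u - 1) := mul_nonneg hγ0 (by linarith)
  -- `u * (rhs - B) - (1 + γ (u - 1)) γ (u A + δ - B) = γ (1 - γ) (u - 1) ((u - 1) B + δ)`
  have key : u * B ≤ u * ((1 + γ * (u - 1)) * ((1 - γ) * B + γ * A) + γ * δ) := by
    nlinarith [mul_le_mul_of_nonneg_left hBA (mul_nonneg (by linarith : 0 ≤ 1 + γ * (u - 1)) hγ0),
      mul_nonneg (mul_nonneg hγu (sub_nonneg.mpr hγ1)) (by nlinarith : 0 ≤ (u - 1) * B + δ)]
  exact le_of_mul_le_mul_left key (by linarith)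

section Amplification

variable {𝒳 : Type*} [DecidableEq 𝒳] {γ u δ : ℝ} {p : (𝒳 →₀ ℕ) → ℝ}

lemma subsampleMean_add_single_le (hγ0 : 0 ≤ γ) (hγ1 : γ ≤ 1) (y : 𝒳 →₀ ℕ) {a : 𝒳}
    (hup : ∀ w, p (w + Finsupp.single a 1) ≤ u * p w + δ) :
    subsampleMean γ (y + Finsupp.single a 1) p
      ≤ (1 + γ * (u - 1)) * subsampleMean γ y p + γ * δ := by
  rw [subsampleMean_add_single_one]
  linarith [mul_le_mul_of_nonneg_left (subsampleMean_le_mul_add hγ0 hγ1 (x := y) hup) hγ0]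

lemma subsampleMean_le_add_single (hγ0 : 0 ≤ γ) (hγ1 : γ ≤ 1) (hu : 1 ≤ u) (hδ : 0 ≤ δ)
    (hp : ∀ z, 0 ≤ p z) (y : 𝒳 →₀ ℕ) {a : 𝒳}
    (hdown : ∀ w, p w ≤ u * p (w + Finsupp.single a 1) + δ) :
    subsampleMean γ y p
      ≤ (1 + γ * (u - 1)) * subsampleMean γ (y + Finsupp.single a 1) p + γ * δ := by
  rw [subsampleMean_add_single_one]
  exact le_amplified_of_le_mul_add hu hγ0 hγ1 hδ (subsampleMean_nonneg hγ0 hγ1 hp)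
    (subsampleMean_le_mul_add hγ0 hγ1 hdown)

end Amplification

section Mechanism

variable {𝒳 : Type*} [DecidableEq 𝒳] {Ω : Type*} [MeasurableSpace Ω]
  {M : (𝒳 →₀ ℕ) → Measure Ω} [∀ z, IsFiniteMeasure (M z)]

lemma subsampledMechanism_apply {γ : ℝ} (hγ0 : 0 ≤ γ) (hγ1 : γ ≤ 1) (x : 𝒳 →₀ ℕ) (S : Set Ω) :
    subsampledMechanism M γ x S
      = ENNReal.ofReal (subsampleMean γ x fun z => (M z S).toReal) := by
  rw [subsampleMean, ENNReal.ofReal_sum_of_nonneg fun z _ =>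
    mul_nonneg (subsampleWeight_nonneg hγ0 hγ1 x z) ENNReal.toReal_nonneg,
    subsampledMechanism, Measure.finsetSum_apply]
  refine sum_congr rfl fun z _ => ?_
  rw [Measure.smul_apply, smul_eq_mul, ENNReal.ofReal_mul (subsampleWeight_nonneg hγ0 hγ1 x z),
    ENNReal.ofReal_toReal (measure_ne_top _ _)]
  rfl

lemma IsDP.toReal_le {ε δ : ℝ} (hdp : IsDP M ε δ) (hδ : 0 ≤ δ) {x y : 𝒳 →₀ ℕ}
    (hxy : Neighboring x y) {S : Set Ω} (hS : MeasurableSet S) :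
    (M x S).toReal ≤ Real.exp ε * (M y S).toReal + δ := by
  have h := ENNReal.toReal_mono (by finiteness) (hdp x y hxy S hS)
  rwa [ENNReal.toReal_add (by finiteness) (by finiteness), ENNReal.toReal_mul,
    ENNReal.toReal_ofReal (Real.exp_pos ε).le, ENNReal.toReal_ofReal hδ] at h

end Mechanism

/-- **Privacy amplification via subsampling.** Let `γ ∈ (0,1]` and let `M` be an
`(ε, δ)`-differentially private mechanism (w.r.t. add/remove-one neighboring). Then the
mechanism that independently retains each record with probability `γ` before applying `M`
is `(ε', γ δ)`-differentially private with `ε' = ln (1 + γ (e^ε - 1))`; in particular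
`ε' ≤ γ (e^ε - 1)`. -/
theorem privacy_amplification_subsampling {𝒳 : Type*} [DecidableEq 𝒳]
    {Ω : Type*} [MeasurableSpace Ω]
    (M : (𝒳 →₀ ℕ) → Measure Ω) (hM : ∀ x, IsProbabilityMeasure (M x))
    (ε δ : ℝ) (hε : 0 ≤ ε) (hδ : 0 ≤ δ) (hdp : IsDP M ε δ)
    (γ : ℝ) (hγ0 : 0 < γ) (hγ1 : γ ≤ 1) :
    IsDP (subsampledMechanism M γ) (Real.log (1 + γ * (Real.exp ε - 1))) (γ * δ) ∧
      Real.log (1 + γ * (Real.exp ε - 1)) ≤ γ * (Real.exp ε - 1) := by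
  have hu : 1 ≤ Real.exp ε := Real.one_le_exp hε
  have hc : 0 < 1 + γ * (Real.exp ε - 1) := by nlinarith
  refine ⟨fun x y hxy S hS => ?_, by linarith [Real.log_le_sub_one_of_pos hc]⟩
  set p : (𝒳 →₀ ℕ) → ℝ := fun z => (M z S).toReal
  have hp : ∀ x y, Neighboring x y → p x ≤ Real.exp ε * p y + δ :=
    fun x y h => hdp.toReal_le hδ h hS
  suffices subsampleMean γ x p ≤ (1 + γ * (Real.exp ε - 1)) * subsampleMean γ y p + γ * δ by
    rw [subsampledMechanism_apply hγ0.le hγ1, subsampledMechanism_apply hγ0.le hγ1,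
      Real.exp_log hc, ← ENNReal.ofReal_mul hc.le, ← ENNReal.ofReal_add
        (mul_nonneg hc.le (subsampleMean_nonneg hγ0.le hγ1 fun _ => ENNReal.toReal_nonneg))
        (mul_nonneg hγ0.le hδ)]
    exact ENNReal.ofReal_le_ofReal this
  rcases hxy.eq_or_eq_add_single with rfl | ⟨a, rfl⟩ | ⟨a, rfl⟩
  · have hB := subsampleMean_nonneg hγ0.le hγ1 (x := x) fun z => (ENNReal.toReal_nonneg : 0 ≤ p z)
    linarith [mul_nonneg (mul_nonneg hγ0.le (sub_nonneg.mpr hu)) hB, mul_nonneg hγ0.le hδ]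
  · exact subsampleMean_add_single_le hγ0.le hγ1 y fun w =>
      hp _ _ (neighboring_add_single_self w a)
  · exact subsampleMean_le_add_single hγ0.le hγ1 hu hδ (fun _ => ENNReal.toReal_nonneg) x
      fun w => hp _ _ (neighboring_add_single_self w a).symm
end

section
/- Output perturbation for regularized ERM is ε-differentially private (Chaudhuri–Monteleoni–Sarwate): Fix n ∈ ℕ, λ > 0, ε > 0, a regularizer N : ℝ^d → ℝ that is differentiable and 1-strongly convex, and a loss ℓ : ℝ → [0,∞) that is convex and differentiable with |ℓ'(z)| < 1 for all z ∈ ℝ. Consider the mechanism M that, on a training set D = {(x_i, y_i)}_{i=1}^n with ‖x_i‖₂ ≤ 1 and y_i ∈ {−1,+1}, outputs f_priv = argmin_{w} [ (1/n) ∑_{i=1}^n ℓ(y_i·⟨w, x_i⟩) + λ·N(w) ] + b, where b ∈ ℝ^d is a random noise vector with probability density proportional to exp(−β‖b‖₂) for β = nλε/2. Then for any two training sets D, D' of size n differing in a single example and every measurable S ⊆ ℝ^d, Pr[M(D) ∈ S] ≤ e^ε · Pr[M(D') ∈ S]; i.e., M is ε-differentially private with respect to neighboring training sets. -/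
/-!
Strong convexity gives quadratic growth around a minimizer, so if two `λ`-strongly convex
objectives differ by a `K`-Lipschitz function, their minimizers are at most `K / λ` apart.
For neighboring training sets the ERM objectives differ by `1/n` times a difference of two
`1`-Lipschitz per-example losses, so the minimizers move by at most `2 / (nλ)`. Translating
the noise density `exp (-β ‖b‖)` by `v` changes it pointwise by a factor at most
`exp (β ‖v‖) ≤ exp ε`, and integrating this bound over `S` gives the privacy guarantee.
-/

open MeasureTheory Filter Topology Set Real
open scoped RealInnerProductSpace NNReal ENNReal

section StrongConvexity

variable {E : Type*} [NormedAddCommGroup E] [NormedSpace ℝ E]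

theorem StrongConvexOn.add_sq_norm_sub_le_of_isMinOn {s : Set E} {m : ℝ} {f : E → ℝ} {w u : E}
    (hf : StrongConvexOn s m f) (hw : w ∈ s) (hu : u ∈ s) (hmin : IsMinOn f s w) :
    f w + m / 2 * ‖u - w‖ ^ 2 ≤ f u := by
  have hslope : ∀ t ∈ Ioo (0 : ℝ) 1, (1 - t) * (m / 2 * ‖w - u‖ ^ 2) ≤ f u - f w := by
    rintro t ⟨ht0, ht1⟩
    have hconv := hf.2 hw hu (sub_nonneg.2 ht1.le) ht0.le (sub_add_cancel 1 t)
    have hle : f w ≤ f ((1 - t) • w + t • u) :=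
      hmin (hf.1 hw hu (sub_nonneg.2 ht1.le) ht0.le (sub_add_cancel 1 t))
    simp only [smul_eq_mul] at hconv
    refine le_of_mul_le_mul_left ?_ ht0
    linarith
  -- any fixed `t` loses the factor `1 - t`; the sharp constant needs `t → 0`
  have hlim : Tendsto (fun t : ℝ => (1 - t) * (m / 2 * ‖w - u‖ ^ 2)) (𝓝[>] 0)
      (𝓝 (m / 2 * ‖w - u‖ ^ 2)) := by
    have : Continuous fun t : ℝ => (1 - t) * (m / 2 * ‖w - u‖ ^ 2) := by fun_prop
    simpa using (this.tendsto 0).mono_left nhdsWithin_le_nhds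
  have hgrowth := le_of_tendsto hlim (eventually_of_mem (Ioo_mem_nhdsGT one_pos) hslope)
  rw [norm_sub_rev]
  linarith

theorem StrongConvexOn.mul_norm_sub_le_of_lipschitzWith_sub {m : ℝ} {K : ℝ≥0} {f g : E → ℝ}
    {w w' : E} (hf : StrongConvexOn univ m f) (hg : StrongConvexOn univ m g)
    (hw : IsMinOn f univ w) (hw' : IsMinOn g univ w') (hK : LipschitzWith K (g - f)) :
    m * ‖w - w'‖ ≤ K := by
  have hfw := hf.add_sq_norm_sub_le_of_isMinOn (mem_univ w) (mem_univ w') hw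
  have hgw := hg.add_sq_norm_sub_le_of_isMinOn (mem_univ w') (mem_univ w) hw'
  have hgf : (g - f) w - (g - f) w' ≤ K * ‖w - w'‖ := by
    simpa [dist_eq_norm] using (abs_le.1 (hK.dist_le_mul w w')).2
  rw [norm_sub_rev w'] at hfw
  simp only [Pi.sub_apply] at hgf
  -- adding `hfw` and `hgw` gives `m ‖w - w'‖ ^ 2 ≤ (g - f) w - (g - f) w'`
  rcases (norm_nonneg (w - w')).eq_or_lt with h | h
  · rw [← h, mul_zero]; exact K.2
  · exact le_of_mul_le_mul_right (by nlinarith) h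

end StrongConvexity

section ERM

variable {E ι : Type*} [NormedAddCommGroup E] [InnerProductSpace ℝ E]

theorem ConvexOn.fun_finset_sum {s : Set E} {t : Finset ι} {f : ι → E → ℝ}
    (hs : Convex ℝ s) (hf : ∀ i ∈ t, ConvexOn ℝ s (f i)) :
    ConvexOn ℝ s fun x => ∑ i ∈ t, f i x := by
  classical
  induction t using Finset.induction_on with
  | empty => simpa using convexOn_const 0 hs
  | insert i t hi ih =>
    simp only [Finset.sum_insert hi]
    exact (hf i (t.mem_insert_self i)).add (ih fun j hj => hf j (Finset.mem_insert_of_mem hj))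

theorem ConvexOn.comp_mul_inner {ℓ : ℝ → ℝ} (hℓ : ConvexOn ℝ univ ℓ) (x : E) (y : ℝ) :
    ConvexOn ℝ univ fun w : E => ℓ (y * ⟪w, x⟫) := by
  simpa [Function.comp_def, real_inner_comm] using hℓ.comp_linearMap (y • innerₗ E x)

theorem LipschitzWith.comp_mul_inner {ℓ : ℝ → ℝ} (hℓ : LipschitzWith 1 ℓ) {x : E} {y : ℝ}
    (hx : ‖x‖ ≤ 1) (hy : |y| ≤ 1) : LipschitzWith 1 fun w : E => ℓ (y * ⟪w, x⟫) := by
  refine LipschitzWith.of_dist_le_mul fun u v => ?_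
  calc dist (ℓ (y * ⟪u, x⟫)) (ℓ (y * ⟪v, x⟫))
      ≤ |y * ⟪u, x⟫ - y * ⟪v, x⟫| := by simpa [Real.dist_eq] using hℓ.dist_le_mul _ _
    _ = |y| * |⟪u - v, x⟫| := by rw [inner_sub_left, ← mul_sub, abs_mul]
    _ ≤ 1 * (‖u - v‖ * 1) := by gcongr; exact (abs_real_inner_le_norm _ _).trans (by gcongr)
    _ = ↑(1 : ℝ≥0) * dist u v := by simp [dist_eq_norm]

def regularizedLoss [Fintype ι] (ℓ : ℝ → ℝ) (N : E → ℝ) (c lam : ℝ) (T : ι → E × ℝ) (w : E) : ℝ :=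
  c * ∑ i, ℓ ((T i).2 * ⟪w, (T i).1⟫) + lam * N w

theorem strongConvexOn_regularizedLoss [Fintype ι] {ℓ : ℝ → ℝ} {N : E → ℝ} {c lam : ℝ}
    (hℓ : ConvexOn ℝ univ ℓ) (hN : StrongConvexOn univ 1 N) (hc : 0 ≤ c) (hlam : 0 ≤ lam)
    (T : ι → E × ℝ) : StrongConvexOn univ lam (regularizedLoss ℓ N c lam T) := by
  rw [strongConvexOn_iff_convex] at hN ⊢
  have hloss := (ConvexOn.fun_finset_sum (t := Finset.univ)
    (f := fun i w => ℓ ((T i).2 * ⟪w, (T i).1⟫)) convex_univ fun i _ =>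
    hℓ.comp_mul_inner (T i).1 (T i).2).smul hc
  refine (hloss.add (hN.smul hlam)).congr fun w _ => ?_
  simp only [regularizedLoss, Pi.add_apply, smul_eq_mul]
  ring

theorem lipschitzWith_regularizedLoss_sub [Fintype ι] {ℓ : ℝ → ℝ} (hℓ : LipschitzWith 1 ℓ)
    (N : E → ℝ) (c lam : ℝ) {T T' : ι → E × ℝ} {i₀ : ι} (hT : ∀ i, i ≠ i₀ → T i = T' i)
    (hx : ‖(T i₀).1‖ ≤ 1) (hy : |(T i₀).2| ≤ 1) (hx' : ‖(T' i₀).1‖ ≤ 1) (hy' : |(T' i₀).2| ≤ 1) :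
    LipschitzWith (‖c‖₊ * 2) (regularizedLoss ℓ N c lam T' - regularizedLoss ℓ N c lam T) := by
  have hsub : regularizedLoss ℓ N c lam T' - regularizedLoss ℓ N c lam T =
      fun w => c • (ℓ ((T' i₀).2 * ⟪w, (T' i₀).1⟫) - ℓ ((T i₀).2 * ⟪w, (T i₀).1⟫)) := by
    ext w
    have hsum : ∑ i, ℓ ((T' i).2 * ⟪w, (T' i).1⟫) - ∑ i, ℓ ((T i).2 * ⟪w, (T i).1⟫) =
        ℓ ((T' i₀).2 * ⟪w, (T' i₀).1⟫) - ℓ ((T i₀).2 * ⟪w, (T i₀).1⟫) := by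
      rw [← Finset.sum_sub_distrib]
      exact Fintype.sum_eq_single i₀ fun i hi => by rw [hT i hi, sub_self]
    simp only [regularizedLoss, Pi.sub_apply, smul_eq_mul]
    linear_combination c * hsum
  rw [hsub, show (2 : ℝ≥0) = 1 + 1 from one_add_one_eq_two.symm]
  exact (lipschitzWith_smul c).comp ((hℓ.comp_mul_inner hx' hy').sub (hℓ.comp_mul_inner hx hy))

end ERM

section Translation

variable {G : Type*} [AddCommGroup G] [MeasurableSpace G] [MeasurableAdd G]
  (μ : Measure G) [μ.IsAddLeftInvariant]

theorem map_add_left_withDensity (ρ : G → ℝ≥0∞) (a : G) :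
    (μ.withDensity ρ).map (a + ·) = μ.withDensity fun y => ρ (y - a) := by
  ext s hs
  rw [Measure.map_apply (measurable_const_add a) hs,
    withDensity_apply _ (measurable_const_add a hs), withDensity_apply _ hs,
    ← (measurePreserving_add_left μ a).setLIntegral_comp_preimage_emb
      (measurableEmbedding_addLeft a) (fun y => ρ (y - a)) s]
  simp

theorem map_add_left_withDensity_le_smul {ρ : G → ℝ≥0∞} {K : ℝ≥0∞} (hK : K ≠ ∞) {a a' : G}
    (h : ∀ y, ρ (y - a) ≤ K * ρ (y - a')) :
    (μ.withDensity ρ).map (a + ·) ≤ K • (μ.withDensity ρ).map (a' + ·) := by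
  rw [map_add_left_withDensity, map_add_left_withDensity, ← withDensity_smul' _ _ hK]
  exact withDensity_mono (ae_of_all _ h)

end Translation

section Laplace

variable {E : Type*} [NormedAddCommGroup E]

theorem ofReal_mul_exp_neg_mul_norm_sub_le {β : ℝ} (hβ : 0 ≤ β) (c : ℝ) (a a' y : E) :
    ENNReal.ofReal (c * exp (-(β * ‖y - a‖))) ≤
      ENNReal.ofReal (exp (β * ‖a - a'‖)) * ENNReal.ofReal (c * exp (-(β * ‖y - a'‖))) := by
  rw [ENNReal.ofReal_mul' (exp_pos _).le, ENNReal.ofReal_mul' (exp_pos _).le, mul_left_comm,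
    ← ENNReal.ofReal_mul (exp_pos _).le, ← exp_add]
  gcongr
  linarith [mul_le_mul_of_nonneg_left (norm_sub_le_norm_sub_add_norm_sub y a a') hβ]

theorem map_add_left_withDensity_exp_neg_mul_norm_le [MeasurableSpace E] [BorelSpace E]
    (μ : Measure E) [μ.IsAddLeftInvariant] {β : ℝ} (hβ : 0 ≤ β) (c : ℝ) (a a' : E) (S : Set E) :
    (μ.withDensity fun b => ENNReal.ofReal (c * exp (-(β * ‖b‖)))).map (a + ·) S ≤
      ENNReal.ofReal (exp (β * ‖a - a'‖)) *
        (μ.withDensity fun b => ENNReal.ofReal (c * exp (-(β * ‖b‖)))).map (a' + ·) S := by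
  have h := map_add_left_withDensity_le_smul μ (ρ := fun b => ENNReal.ofReal (c * exp (-(β * ‖b‖))))
    ENNReal.ofReal_ne_top (ofReal_mul_exp_neg_mul_norm_sub_le hβ c a a')
  exact Measure.le_iff'.1 h S

end Laplace

theorem output_perturbation_dp_general {d n : ℕ} (lam ε : ℝ)
    (hlam : 0 < lam) (hε : 0 < ε)
    (N : EuclideanSpace ℝ (Fin d) → ℝ)
    (hNsc : ConvexOn ℝ Set.univ fun w => N w - (1 / 2) * ‖w‖ ^ 2)
    (ℓ : ℝ → ℝ)
    (hℓconv : ConvexOn ℝ Set.univ ℓ)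
    (hℓdiff : Differentiable ℝ ℓ) (hℓ' : ∀ z, |deriv ℓ z| < 1)
    -- the regularized empirical loss
    (J : (Fin n → EuclideanSpace ℝ (Fin d) × ℝ) → EuclideanSpace ℝ (Fin d) → ℝ)
    (hJ : ∀ T w, J T w =
      (1 / (n : ℝ)) * ∑ i, ℓ ((T i).2 * (inner ℝ w (T i).1 : ℝ)) + lam * N w)
    -- the (unique) ERM minimizer of `J T`
    (fmin : (Fin n → EuclideanSpace ℝ (Fin d) × ℝ) → EuclideanSpace ℝ (Fin d))
    (hfmin : ∀ T, ∀ u, J T (fmin T) ≤ J T u)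
    -- the noise parameter and normalizing constant of the noise density
    (β C : ℝ) (hβ : β = n * lam * ε / 2)
    -- the output-perturbation mechanism
    (M : (Fin n → EuclideanSpace ℝ (Fin d) × ℝ) → Measure (EuclideanSpace ℝ (Fin d)))
    (hM : ∀ T, M T =
      (volume.withDensity fun b => ENNReal.ofReal ((1 / C) * Real.exp (-(β * ‖b‖)))).map
        fun b => fmin T + b)
    -- neighboring valid training sets
    (D D' : Fin n → EuclideanSpace ℝ (Fin d) × ℝ)
    (hD : ∀ i, ‖(D i).1‖ ≤ 1 ∧ ((D i).2 = -1 ∨ (D i).2 = 1))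
    (hD' : ∀ i, ‖(D' i).1‖ ≤ 1 ∧ ((D' i).2 = -1 ∨ (D' i).2 = 1))
    (hneighbor : ∃ i₀ : Fin n, ∀ i, i ≠ i₀ → D i = D' i) :
    ∀ S : Set (EuclideanSpace ℝ (Fin d)), MeasurableSet S →
      M D S ≤ ENNReal.ofReal (Real.exp ε) * M D' S := by
  obtain ⟨i₀, hi₀⟩ := hneighbor
  have hn : (0 : ℝ) < n := Nat.cast_pos.2 i₀.pos
  have hJ' : ∀ T, J T = regularizedLoss ℓ N (1 / (n : ℝ)) lam T := fun T => funext (hJ T)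
  have hℓlip : LipschitzWith 1 ℓ :=
    lipschitzWith_of_nnnorm_deriv_le hℓdiff fun z => by
      simpa [← NNReal.coe_le_coe, Real.norm_eq_abs] using (hℓ' z).le
  have hlabel : ∀ y : ℝ, y = -1 ∨ y = 1 → |y| ≤ 1 := by rintro y (rfl | rfl) <;> simp
  have hsc : ∀ T, StrongConvexOn univ lam (J T) := fun T => hJ' T ▸
    strongConvexOn_regularizedLoss hℓconv (strongConvexOn_iff_convex.2 hNsc) (by positivity)
      hlam.le T
  have hsens : lam * ‖fmin D - fmin D'‖ ≤ 2 / n := by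
    have hlip := lipschitzWith_regularizedLoss_sub hℓlip N (1 / (n : ℝ)) lam hi₀
      (hD i₀).1 (hlabel _ (hD i₀).2) (hD' i₀).1 (hlabel _ (hD' i₀).2)
    rw [← hJ', ← hJ'] at hlip
    refine ((hsc D).mul_norm_sub_le_of_lipschitzWith_sub (hsc D') (fun u _ => hfmin D u)
      (fun u _ => hfmin D' u) hlip).trans_eq ?_
    simp [div_eq_inv_mul]
  have hβΔ : β * ‖fmin D - fmin D'‖ ≤ ε :=
    calc β * ‖fmin D - fmin D'‖ = ε / 2 * n * (lam * ‖fmin D - fmin D'‖) := by rw [hβ]; ring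
      _ ≤ ε / 2 * n * (2 / n) := by gcongr
      _ = ε := by field_simp
  intro S _
  rw [hM, hM]
  calc _ ≤ ENNReal.ofReal (exp (β * ‖fmin D - fmin D'‖)) * _ :=
        map_add_left_withDensity_exp_neg_mul_norm_le volume (by rw [hβ]; positivity) _ _ _ S
    _ ≤ _ := by gcongr

/-- **Output perturbation for regularized ERM is `ε`-differentially private
(Chaudhuri–Monteleoni–Sarwate).** The mechanism outputs
`argmin_w [(1/n) ∑ ℓ(yᵢ ⟪w, xᵢ⟫) + λ N(w)] + b`, where `b` is drawn with density
proportional to `exp (-β ‖b‖₂)` with `β = n λ ε / 2`. Under the stated conditions it is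
`ε`-differentially private with respect to training sets differing in one example. -/
theorem output_perturbation_dp {d n : ℕ} (hn : 0 < n) (lam ε : ℝ)
    (hlam : 0 < lam) (hε : 0 < ε)
    (N : EuclideanSpace ℝ (Fin d) → ℝ)
    (hNdiff : Differentiable ℝ N)
    (hNsc : ConvexOn ℝ Set.univ fun w => N w - (1 / 2) * ‖w‖ ^ 2)
    (ℓ : ℝ → ℝ) (hℓ0 : ∀ z, 0 ≤ ℓ z)
    (hℓconv : ConvexOn ℝ Set.univ ℓ)
    (hℓdiff : Differentiable ℝ ℓ) (hℓ' : ∀ z, |deriv ℓ z| < 1)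
    -- the regularized empirical loss
    (J : (Fin n → EuclideanSpace ℝ (Fin d) × ℝ) → EuclideanSpace ℝ (Fin d) → ℝ)
    (hJ : ∀ T w, J T w =
      (1 / (n : ℝ)) * ∑ i, ℓ ((T i).2 * (inner ℝ w (T i).1 : ℝ)) + lam * N w)
    -- the (unique) ERM minimizer of `J T`
    (fmin : (Fin n → EuclideanSpace ℝ (Fin d) × ℝ) → EuclideanSpace ℝ (Fin d))
    (hfmin : ∀ T, ∀ u, J T (fmin T) ≤ J T u)
    -- the noise parameter and normalizing constant of the noise density
    (β C : ℝ) (hβ : β = n * lam * ε / 2)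
    (hC : C = ∫ b : EuclideanSpace ℝ (Fin d), Real.exp (-(β * ‖b‖)))
    -- the output-perturbation mechanism
    (M : (Fin n → EuclideanSpace ℝ (Fin d) × ℝ) → Measure (EuclideanSpace ℝ (Fin d)))
    (hM : ∀ T, M T =
      (volume.withDensity fun b => ENNReal.ofReal ((1 / C) * Real.exp (-(β * ‖b‖)))).map
        fun b => fmin T + b)
    -- neighboring valid training sets
    (D D' : Fin n → EuclideanSpace ℝ (Fin d) × ℝ)
    (hD : ∀ i, ‖(D i).1‖ ≤ 1 ∧ ((D i).2 = -1 ∨ (D i).2 = 1))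
    (hD' : ∀ i, ‖(D' i).1‖ ≤ 1 ∧ ((D' i).2 = -1 ∨ (D' i).2 = 1))
    (hneighbor : ∃ i₀ : Fin n, ∀ i, i ≠ i₀ → D i = D' i) :
    ∀ S : Set (EuclideanSpace ℝ (Fin d)), MeasurableSet S →
      M D S ≤ ENNReal.ofReal (Real.exp ε) * M D' S :=
  output_perturbation_dp_general lam ε hlam hε N hNsc ℓ hℓconv hℓdiff hℓ' J hJ fmin hfmin β C hβ M
    hM D D' hD hD' hneighbor
end
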